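/- For every k ≥ 3 and l ≥ 3 and every n, there exists a set S ⊆ ℝ² with |S| ≥ n such that no l+1 points of S are collinear and S admits a k-coloring with no monochromatic maximal collinear subset of size ≥ 2; i.e., Pór–Wood's conjecture fails for all k, l ≥ 3. -/

import Mathlib

/-!
The points of the nodal cubic `y² = x²(x - 1)` are parametrised by `t ↦ (t² + 1, t³ + t)`, and
three distinct of them are collinear iff their parameters satisfy `ab + ac + bc = 1`.  Writing
`t = tan θ`, this says `θ_a + θ_b + θ_c ≡ π/2 (mod π)`: the curve carries the group law of the
circle.  Taking `θ_i = π i / m + π / 6` for `i ∈ ℤ/m`, with `m ≡ 1 (mod 3)` so that no `θ_i`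
lies in `π/2 + πℤ`, embeds the cyclic group, so three points are collinear iff `i + j + r = 0`.
As on any cubic, no four points are collinear, and every pair `i, j` lies on a line together
with `-(i + j)`; colouring `ℤ/m` by thirds of `[0, m)` leaves no solution of `i + j + r ≡ 0`
with `i ≠ j` inside one colour class.
-/

open Real

theorem collinear_triple_iff (p q r : ℝ × ℝ) :
    Collinear ℝ ({p, q, r} : Set (ℝ × ℝ)) ↔
      (q.1 - p.1) * (r.2 - p.2) = (q.2 - p.2) * (r.1 - p.1) := by
  constructor
  · rw [collinear_iff_of_mem (Set.mem_insert p _)]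
    rintro ⟨v, hv⟩
    obtain ⟨a, rfl⟩ := hv q (by simp)
    obtain ⟨b, rfl⟩ := hv r (by simp)
    simp only [vadd_eq_add, Prod.fst_add, Prod.snd_add, Prod.smul_fst, Prod.smul_snd, smul_eq_mul]
    ring
  · intro h
    rcases eq_or_ne q p with rfl | hqp
    · rw [Set.insert_idem]
      exact collinear_pair ℝ q r
    have hd : (q.1 - p.1) ^ 2 + (q.2 - p.2) ^ 2 ≠ 0 := by
      intro h0
      apply hqp
      ext <;> nlinarith [sq_nonneg (q.1 - p.1), sq_nonneg (q.2 - p.2)]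
    rw [collinear_iff_of_mem (Set.mem_insert p _)]
    refine ⟨q - p, ?_⟩
    rintro x (rfl | rfl | rfl)
    · exact ⟨0, by simp⟩
    · exact ⟨1, by simp⟩
    -- the coefficient of the orthogonal projection of `x - p` onto `q - p`
    refine ⟨((x.1 - p.1) * (q.1 - p.1) + (x.2 - p.2) * (q.2 - p.2)) /
      ((q.1 - p.1) ^ 2 + (q.2 - p.2) ^ 2), ?_⟩
    ext <;> simp only [vadd_eq_add, Prod.fst_add, Prod.snd_add, Prod.smul_fst, Prod.smul_snd,
      smul_eq_mul, Prod.fst_sub, Prod.snd_sub] <;> field_simp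
    · linear_combination -(q.2 - p.2) * h
    · linear_combination (q.1 - p.1) * h

theorem mem_of_collinear_of_maximal {k V P : Type*} [Field k] [AddCommGroup V] [Module k V]
    [AddTorsor V P] {S L : Set P} (hLS : L ⊆ S) (hL : Collinear k L)
    (hmax : ∀ L' : Set P, L ⊆ L' → L' ⊆ S → Collinear k L' → L' = L)
    {p q x : P} (hp : p ∈ L) (hq : q ∈ L) (hpq : p ≠ q) (hx : x ∈ S)
    (hpqx : Collinear k ({p, q, x} : Set P)) : x ∈ L := by
  have hins : Collinear k (insert x L) := by
    rw [hL.collinear_insert_iff_of_ne hp hq hpq]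
    exact hpqx.subset (by simp [Set.insert_subset_iff])
  rw [← hmax _ (Set.subset_insert x L) (Set.insert_subset hx hLS) hins]
  exact Set.mem_insert x L

def cubicPoint (t : ℝ) : ℝ × ℝ := (t ^ 2 + 1, t ^ 3 + t)

theorem cubicPoint_injective : Function.Injective cubicPoint := by
  intro a b h
  have h₁ : a ^ 2 + 1 = b ^ 2 + 1 := congrArg Prod.fst h
  have h₂ : a ^ 3 + a = b ^ 3 + b := congrArg Prod.snd h
  nlinarith [sq_nonneg (a + b), sq_nonneg (a - b)]

theorem collinear_cubicPoint_of_eq_one {a b c : ℝ} (h : a * b + a * c + b * c = 1) :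
    Collinear ℝ ({cubicPoint a, cubicPoint b, cubicPoint c} : Set (ℝ × ℝ)) := by
  rw [collinear_triple_iff]
  simp only [cubicPoint]
  linear_combination ((b - a) * (c - a) * (c - b)) * h

theorem eq_one_of_collinear_cubicPoint {a b c : ℝ} (hab : a ≠ b) (hac : a ≠ c) (hbc : b ≠ c)
    (h : Collinear ℝ ({cubicPoint a, cubicPoint b, cubicPoint c} : Set (ℝ × ℝ))) :
    a * b + a * c + b * c = 1 := by
  rw [collinear_triple_iff] at h
  simp only [cubicPoint] at h
  have hne : (b - a) * (c - a) * (c - b) ≠ 0 :=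
    mul_ne_zero (mul_ne_zero (sub_ne_zero.2 hab.symm) (sub_ne_zero.2 hac.symm))
      (sub_ne_zero.2 hbc.symm)
  have := (mul_eq_zero.1 (show (b - a) * (c - a) * (c - b) * (a * b + a * c + b * c - 1) = 0 by
    linear_combination h)).resolve_left hne
  linarith

theorem card_le_three_of_collinear {T : Finset (ℝ × ℝ)} (hT : ↑T ⊆ Set.range cubicPoint)
    (hcol : Collinear ℝ (T : Set (ℝ × ℝ))) : T.card ≤ 3 := by
  rcases le_or_gt T.card 2 with h | h
  · omega
  obtain ⟨_, _, _, hp, hq, hr, hpq, hpr, hqr⟩ := Finset.two_lt_card_iff.1 h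
  obtain ⟨a, rfl⟩ := hT hp
  obtain ⟨b, rfl⟩ := hT hq
  obtain ⟨c, rfl⟩ := hT hr
  calc T.card ≤ ({cubicPoint a, cubicPoint b, cubicPoint c} : Finset _).card :=
        Finset.card_le_card fun x hx => ?_
    _ ≤ 3 := Finset.card_le_three
  obtain ⟨d, rfl⟩ := hT hx
  by_contra hd
  simp only [Finset.mem_insert, Finset.mem_singleton, not_or] at hd
  obtain ⟨had, hbd, hcd⟩ := hd
  have coll : ∀ {x y z : ℝ}, cubicPoint x ∈ T → cubicPoint y ∈ T → cubicPoint z ∈ T →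
      x ≠ y → x ≠ z → y ≠ z → x * y + x * z + y * z = 1 := fun hx hy hz hxy hxz hyz =>
    eq_one_of_collinear_cubicPoint hxy hxz hyz
      (hcol.subset (by simp [Set.insert_subset_iff, hx, hy, hz]))
  have hab := ne_of_apply_ne cubicPoint hpq
  have hac := ne_of_apply_ne cubicPoint hpr
  have hbc := ne_of_apply_ne cubicPoint hqr
  have hda := ne_of_apply_ne cubicPoint had
  have hdb := ne_of_apply_ne cubicPoint hbd
  have hdc := ne_of_apply_ne cubicPoint hcd
  have E₁ := coll hp hq hr hab hac hbc
  have E₂ := coll hp hq hx hab hda.symm hdb.symm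
  have E₃ := coll hp hr hx hac hda.symm hdc.symm
  have hab' : a + b = 0 :=
    (mul_eq_zero.1 (by linear_combination E₁ - E₂ : (a + b) * (c - d) = 0)).resolve_right
      (sub_ne_zero.2 hdc.symm)
  have hac' : a + c = 0 :=
    (mul_eq_zero.1 (by linear_combination E₁ - E₃ : (b - d) * (a + c) = 0)).resolve_left
      (sub_ne_zero.2 hdb.symm)
  exact hbc (by linarith)

theorem sin_pi_mul_div_eq_zero_iff {N : ℕ} (hN : N ≠ 0) (a : ℤ) :
    sin (π * a / N) = 0 ↔ (N : ℤ) ∣ a := by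
  have hN' : (N : ℝ) ≠ 0 := Nat.cast_ne_zero.2 hN
  rw [sin_eq_zero_iff]
  constructor
  · rintro ⟨c, hc⟩
    field_simp at hc
    exact ⟨c, by rw [mul_comm]; exact_mod_cast hc.symm⟩
  · rintro ⟨c, rfl⟩
    exact ⟨c, by push_cast; field_simp⟩

theorem tan_mul_add_tan_mul_add_tan_mul_eq_one_iff {x y z : ℝ} (hx : cos x ≠ 0)
    (hy : cos y ≠ 0) (hz : cos z ≠ 0) :
    tan x * tan y + tan x * tan z + tan y * tan z = 1 ↔ cos (x + y + z) = 0 := by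
  have key : cos (x + y + z) =
      cos x * cos y * cos z * (1 - (tan x * tan y + tan x * tan z + tan y * tan z)) := by
    simp only [tan_eq_sin_div_cos, cos_add, sin_add]
    field_simp
    ring
  rw [key, mul_eq_zero, or_iff_right (mul_ne_zero (mul_ne_zero hx hy) hz), sub_eq_zero, eq_comm]

section Cyclic

variable {m : ℕ} [NeZero m]

/-- The offset `π / 6` makes three angles sum to `π / 2` modulo `π` exactly when the indices sum
to `0` in `ℤ/m`. -/
noncomputable def cyclicAngle (m : ℕ) (i : ZMod m) : ℝ := π * i.val / m + π / 6

theorem cos_cyclicAngle_ne_zero (hm : m % 3 = 1) (i : ZMod m) : cos (cyclicAngle m i) ≠ 0 := by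
  have h3m : 3 * m ≠ 0 := by omega
  have hangle : cyclicAngle m i + π / 2 = π * ((3 * i.val + 2 * m : ℕ) : ℤ) / (3 * m : ℕ) := by
    have : (m : ℝ) ≠ 0 := Nat.cast_ne_zero.2 (NeZero.ne m)
    simp only [cyclicAngle]
    push_cast
    field_simp
    ring
  rw [← sin_add_pi_div_two, hangle, Ne, sin_pi_mul_div_eq_zero_iff h3m]
  rintro ⟨c, hc⟩
  push_cast at hc
  have : (3 : ℤ) ∣ 2 * m := ⟨m * c - i.val, by linarith⟩
  omega

theorem cyclicAngle_add_add (i j r : ZMod m) :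
    cyclicAngle m i + cyclicAngle m j + cyclicAngle m r =
      π * ((i.val + j.val + r.val : ℕ) : ℤ) / m + π / 2 := by
  have : (m : ℝ) ≠ 0 := Nat.cast_ne_zero.2 (NeZero.ne m)
  simp only [cyclicAngle]
  push_cast
  field_simp
  ring

theorem tan_cyclicAngle_injective (hm : m % 3 = 1) :
    Function.Injective fun i => tan (cyclicAngle m i) := by
  intro i j h
  have hsin : sin (cyclicAngle m i - cyclicAngle m j) = 0 := by
    simp only [tan_eq_sin_div_cos] at h
    rw [div_eq_div_iff (cos_cyclicAngle_ne_zero hm i) (cos_cyclicAngle_ne_zero hm j)] at h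
    rw [sin_sub]
    linear_combination h
  have hdiff : cyclicAngle m i - cyclicAngle m j = π * ((i.val : ℤ) - j.val : ℤ) / m := by
    simp only [cyclicAngle]
    push_cast
    ring
  rw [hdiff, sin_pi_mul_div_eq_zero_iff (NeZero.ne m), ← ZMod.intCast_zmod_eq_zero_iff_dvd]
    at hsin
  push_cast at hsin
  rwa [ZMod.natCast_zmod_val, ZMod.natCast_zmod_val, sub_eq_zero] at hsin

noncomputable def cyclicPoint (m : ℕ) (i : ZMod m) : ℝ × ℝ := cubicPoint (tan (cyclicAngle m i))

theorem cyclicPoint_injective (hm : m % 3 = 1) : Function.Injective (cyclicPoint m) :=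
  cubicPoint_injective.comp (tan_cyclicAngle_injective hm)

theorem collinear_cyclicPoint_of_add_add_eq_zero (hm : m % 3 = 1) {i j r : ZMod m}
    (h : i + j + r = 0) :
    Collinear ℝ ({cyclicPoint m i, cyclicPoint m j, cyclicPoint m r} : Set (ℝ × ℝ)) := by
  apply collinear_cubicPoint_of_eq_one
  rw [tan_mul_add_tan_mul_add_tan_mul_eq_one_iff (cos_cyclicAngle_ne_zero hm i)
    (cos_cyclicAngle_ne_zero hm j) (cos_cyclicAngle_ne_zero hm r), cyclicAngle_add_add,
    cos_add_pi_div_two, neg_eq_zero, sin_pi_mul_div_eq_zero_iff (NeZero.ne m),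
    ← ZMod.intCast_zmod_eq_zero_iff_dvd]
  push_cast
  simpa only [ZMod.natCast_zmod_val] using h

def thirdsColor (i : ZMod m) : Fin 3 :=
  if 3 * i.val < m then 0 else if 3 * i.val < 2 * m then 1 else 2

theorem thirdsColor_ne_of_add_add_eq_zero {i j r : ZMod m} (hij : i ≠ j) (h : i + j + r = 0)
    (hcol : thirdsColor i = thirdsColor j) : thirdsColor i ≠ thirdsColor r := by
  have hval : i.val ≠ j.val := fun hv => hij (ZMod.val_injective m hv)
  have hi := ZMod.val_lt i
  have hj := ZMod.val_lt j
  have hr := ZMod.val_lt r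
  obtain ⟨q, hq⟩ : m ∣ i.val + j.val + r.val := by
    rw [← ZMod.natCast_eq_zero_iff]
    push_cast
    simpa only [ZMod.natCast_zmod_val] using h
  have hq3 : q < 3 := by
    by_contra! hq3
    nlinarith
  simp only [thirdsColor] at hcol ⊢
  interval_cases q <;> split_ifs at hcol ⊢ <;> omega

end Cyclic

theorem por_wood_conjecture_fails (k l : ℕ) (hk : 3 ≤ k) (hl : 3 ≤ l) (n : ℕ) :
    ∃ S : Finset (ℝ × ℝ), n ≤ S.card ∧
      (∀ T ⊆ S, T.card = l + 1 → ¬ Collinear ℝ (T : Set (ℝ × ℝ))) ∧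
      ∃ c : ℝ × ℝ → Fin k,
        ∀ L : Set (ℝ × ℝ), L ⊆ ↑S → Collinear ℝ L →
          (∀ L' : Set (ℝ × ℝ), L ⊆ L' → L' ⊆ ↑S → Collinear ℝ L' → L' = L) →
          2 ≤ L.ncard →
          ∃ p ∈ L, ∃ q ∈ L, c p ≠ c q := by
  set m := 3 * n + 1
  have hm : m % 3 = 1 := by omega
  have : NeZero m := ⟨by omega⟩
  have hinj := cyclicPoint_injective hm
  refine ⟨Finset.univ.image (cyclicPoint m), ?_, ?_,
    fun p => Fin.castLE hk (thirdsColor (Function.invFun (cyclicPoint m) p)), ?_⟩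
  · rw [Finset.card_image_of_injective _ hinj, Finset.card_univ, ZMod.card]
    omega
  · intro T hT hcard hcol
    have hTrange : ↑T ⊆ Set.range cubicPoint := fun x hx => by
      obtain ⟨i, -, rfl⟩ := Finset.mem_image.1 (hT hx)
      exact ⟨_, rfl⟩
    have := card_le_three_of_collinear hTrange hcol
    omega
  · intro L hLS hL hmax hcard
    obtain ⟨_, hp, _, hq, hpq⟩ := (Set.one_lt_ncard (Set.finite_of_ncard_pos (by omega))).1 hcard
    obtain ⟨i, -, rfl⟩ := Finset.mem_image.1 (hLS hp)
    obtain ⟨j, -, rfl⟩ := Finset.mem_image.1 (hLS hq)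
    have hr := mem_of_collinear_of_maximal hLS hL hmax hp hq hpq
      (Finset.mem_coe.2 (Finset.mem_image_of_mem _ (Finset.mem_univ (-(i + j)))))
      (collinear_cyclicPoint_of_add_add_eq_zero hm (add_neg_cancel (i + j)))
    by_contra! hall
    have hsame : ∀ {a b : ZMod m}, cyclicPoint m a ∈ L → cyclicPoint m b ∈ L →
        thirdsColor a = thirdsColor b := fun ha hb => Fin.castLE_injective hk <| by
      simpa only [Function.leftInverse_invFun hinj _] using hall _ ha _ hb
    exact thirdsColor_ne_of_add_add_eq_zero (ne_of_apply_ne _ hpq) (add_neg_cancel (i + j))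
      (hsame hp hq) (hsame hp hr)
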